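/- arXiv:2101.04783 — 2 statements merged into one kernel-verified Lean document; each statement's English description precedes it below -/
import Mathlib

section
/- Define p : ℝ → ℝ by p(t) = 1 for t ≤ 0, p(t) = 1 + (t⁶/64)·(1 - 2(t-2) + (9/4)(t-2)² - (7/4)(t-2)³ + (7/8)(t-2)⁴) for 0 ≤ t ≤ 2, and p(t) = t for t ≥ 2. Then p is five times continuously differentiable on ℝ. -/
/-!
The middle polynomial agrees with `1` to order five at `0`, and with `t` to order five
at `2`. Hence `p t - 1` is `t₊⁶` times a polynomial, and the correction needed past `2`
is `(t - 2)₊⁶` times a polynomial, so `p` is a polynomial combination of `t₊⁶` and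
`(t - 2)₊⁶`, where `x₊ = max x 0`. Each `x₊ⁿ⁺¹` is `Cⁿ`, its derivative being
`(n + 1) x₊ⁿ`.
-/

noncomputable def gineSangClip (t : ℝ) : ℝ :=
  if t ≤ 0 then 1
  else if t ≤ 2 then
    1 + (t ^ 6 / 64) *
      (1 - 2 * (t - 2) + (9 / 4) * (t - 2) ^ 2 - (7 / 4) * (t - 2) ^ 3
        + (7 / 8) * (t - 2) ^ 4)
  else t

open Set

theorem hasDerivAt_max_zero_pow (n : ℕ) (x : ℝ) :
    HasDerivAt (fun y : ℝ => max y 0 ^ (n + 2)) ((n + 2) * max x 0 ^ (n + 1)) x := by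
  refine hasDerivAt_of_hasDerivAt_of_ne' (x := 0) (g := fun y => (n + 2) * max y 0 ^ (n + 1))
    (fun y hy => ?_) (by fun_prop) (by fun_prop) x
  rcases hy.lt_or_gt with hy | hy
  · have hloc : (fun z : ℝ => max z 0 ^ (n + 2)) =ᶠ[nhds y] fun _ => 0 := by
      filter_upwards [Iio_mem_nhds hy] with z hz
      simp [max_eq_right hz.out.le]
    simpa [max_eq_right hy.le] using (hasDerivAt_const y (0 : ℝ)).congr_of_eventuallyEq hloc
  · have hloc : (fun z : ℝ => max z 0 ^ (n + 2)) =ᶠ[nhds y] fun z => z ^ (n + 2) := by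
      filter_upwards [Ioi_mem_nhds hy] with z hz
      rw [max_eq_left hz.out.le]
    simpa [max_eq_left hy.le] using (hasDerivAt_pow (n + 2) y).congr_of_eventuallyEq hloc

theorem contDiff_max_zero_pow (n : ℕ) : ContDiff ℝ n fun x : ℝ => max x 0 ^ (n + 1) := by
  induction n with
  | zero => simpa using continuous_id.max continuous_const
  | succ n ih =>
    rw [Nat.cast_succ, contDiff_succ_iff_deriv]
    refine ⟨fun x => (hasDerivAt_max_zero_pow n x).differentiableAt, by simp, ?_⟩
    rw [funext fun x => (hasDerivAt_max_zero_pow n x).deriv]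
    exact contDiff_const.mul ih

theorem gineSangClip_eq (t : ℝ) :
    gineSangClip t =
      1 + max t 0 ^ 6 / 64 *
          (1 - 2 * (t - 2) + (9 / 4) * (t - 2) ^ 2 - (7 / 4) * (t - 2) ^ 3
            + (7 / 8) * (t - 2) ^ 4)
        - max (t - 2) 0 ^ 6 *
          (21 / 32 + (15 / 16) * (t - 2) + (135 / 256) * (t - 2) ^ 2
            + (35 / 256) * (t - 2) ^ 3 + (7 / 512) * (t - 2) ^ 4) := by
  unfold gineSangClip
  split_ifs with h0 h2
  · simp [max_eq_right h0, max_eq_right (by linarith : t - 2 ≤ 0)]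
  · simp [max_eq_left (not_le.1 h0).le, max_eq_right (by linarith : t - 2 ≤ 0)]
  · rw [max_eq_left (by linarith : 0 ≤ t), max_eq_left (by linarith : 0 ≤ t - 2)]
    ring

theorem gineSangClip_contDiff : ContDiff ℝ 5 gineSangClip := by
  rw [funext gineSangClip_eq]
  have hpos : ContDiff ℝ 5 fun x : ℝ => max x 0 ^ 6 := contDiff_max_zero_pow 5
  have hshift : ContDiff ℝ 5 fun t : ℝ => max (t - 2) 0 ^ 6 :=
    hpos.comp (contDiff_id.sub contDiff_const)
  exact (contDiff_const.add ((hpos.div_const _).mul (by fun_prop))).sub (hshift.mul (by fun_prop))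
end

section
/- Define p : ℝ → ℝ as the Giné–Sang clipping function: p(t) = 1 for t ≤ 0, p(t) = 1 + (t⁶/64)·(1 - 2(t-2) + (9/4)(t-2)² - (7/4)(t-2)³ + (7/8)(t-2)⁴) for 0 ≤ t ≤ 2, and p(t) = t for t ≥ 2. Then p(t) ≥ 1 for all t ∈ ℝ. -/
theorem gineSangClip_ge_one : ∀ t : ℝ, 1 ≤ gineSangClip t := by
  intro t
  unfold gineSangClip
  split_ifs with h1 h2
  · exact le_refl _
  · push_neg at h1
    have hs : t - 2 ≤ 0 := by linarith
    have h6 : (0:ℝ) ≤ t ^ 6 / 64 := by positivity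
    have hQ : 0 ≤ 1 - 2 * (t - 2) + (9 / 4) * (t - 2) ^ 2 - (7 / 4) * (t - 2) ^ 3
        + (7 / 8) * (t - 2) ^ 4 := by
      have h2' : 0 ≤ (t - 2) ^ 2 := sq_nonneg _
      have h3' : 0 ≤ -(t - 2) ^ 3 := by
        have := mul_nonneg h2' (neg_nonneg.mpr hs)
        nlinarith
      have h4' : 0 ≤ (t - 2) ^ 4 := by positivity
      nlinarith
    nlinarith [mul_nonneg h6 hQ]
  · push_neg at h2; linarith
end
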